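/- Let ℓ ≥ 1 and r ≥ 1 be integers and let (x_n)_{n ≥ ℓ} be a sequence of real numbers that is zero for all sufficiently large n. Then Σ_{j=ℓ}^{∞} (j^r/j!) x_j = Σ_{j=ℓ}^{∞} d_{ℓ,r}(j) · Σ_{n=j}^{∞} x_n/(n−j)!, where d_{ℓ,r}(j) = Σ_{k=ℓ}^{j} (k^r/k!)·((−1)^{j−k}/(j−k)!). In other words, the constants z_{ℓ,r}(j) solving the system Σ_{j≥ℓ}(j^r/j!)ω(j,j) = Σ_{j≥ℓ} z_{ℓ,r}(j) Ω(j,j), where Ω(t,s) = Σ_{n≥s} ω(t,n) and ω(t,n) = ω(n,n)/(n−t)! for t ≤ n, are given by z_{ℓ,r}(j) = d_{ℓ,r}(j). -/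

import Mathlib

open scoped BigOperators Classical
open Filter

noncomputable section

/-- The Kronecker symbol `(d/p)` at a prime `p`. -/
def kronP (d : ℤ) (p : ℕ) : ℤ :=
  if p = 2 then
    (if d % 2 = 0 then 0 else if d % 8 = 1 ∨ d % 8 = 7 then 1 else -1)
  else jacobiSym d p

/-- The Kronecker symbol `(d/n)` (for `n ≥ 1`), defined multiplicatively. -/
def kron (d : ℤ) (n : ℕ) : ℤ :=
  n.factorization.prod fun p k => kronP d p ^ k

/-- `L(1, χ_d)`, the value at `s = 1` of the Dirichlet series of the Kronecker symbol,
as a limit of partial sums. -/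
def LOne (d : ℤ) : ℝ :=
  limUnder atTop fun X : ℕ => ∑ n ∈ Finset.Icc 1 X, (kron d n : ℝ) / n

/-- The Kronecker class number `H(D)` of a (negative) discriminant `D`. -/
def kroneckerH (D : ℤ) : ℝ :=
  ∑ f ∈ (Finset.Icc 1 D.natAbs).filter
      (fun f => ((f : ℤ) ^ 2 ∣ D ∧ ((D / (f : ℤ) ^ 2) % 4 = 0 ∨ (D / (f : ℤ) ^ 2) % 4 = 1))),
    Real.sqrt |(D : ℝ)| / (2 * Real.pi * f) * LOne (D / (f : ℤ) ^ 2)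

/-- `D_N(p) = (p + 1 - N)² - 4p`. -/
def DN (N p : ℕ) : ℤ := ((p : ℤ) + 1 - N) ^ 2 - 4 * p

/-- `N⁻ = (√N - 1)²`. -/
def Nminus (N : ℕ) : ℝ := (Real.sqrt N - 1) ^ 2

/-- `N⁺ = (√N + 1)²`. -/
def Nplus (N : ℕ) : ℝ := (Real.sqrt N + 1) ^ 2

/-- The primes in the Hasse interval `(N⁻, N⁺)`. -/
def primesIn (N : ℕ) : Set ℕ := {p | p.Prime ∧ Nminus N < p ∧ (p : ℝ) < Nplus N}

/-- The number of points on `y² = x³ + sx + t` over `ZMod p`,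
including the point at infinity. -/
def curveCard (p : ℕ) (s t : ZMod p) : ℕ :=
  1 + Nat.card {xy : ZMod p × ZMod p // xy.2 ^ 2 = xy.1 ^ 3 + s * xy.1 + t}

/-- `M_{E_{a,b}}(N)`: the number of primes of good reduction for `E_{a,b}`
with `#E_{a,b}(𝔽_p) = N`. -/
def ME (a b : ℤ) (N : ℕ) : ℕ :=
  Nat.card {p : ℕ // p.Prime ∧ ¬((p : ℤ) ∣ 4 * a ^ 3 + 27 * b ^ 2) ∧
    curveCard p (a : ZMod p) (b : ZMod p) = N}

/-- The family `𝒞(A,B)` (identified with the set of coefficient pairs `(a,b)`). -/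
def fam (A B : ℝ) : Set (ℤ × ℤ) :=
  {ab | (|ab.1| : ℝ) ≤ A ∧ (|ab.2| : ℝ) ≤ B ∧ 4 * ab.1 ^ 3 + 27 * ab.2 ^ 2 ≠ 0}

/-- Tuples of `ℓ` pairwise distinct primes in the Hasse interval. -/
def primeTuples (N ℓ : ℕ) : Set (Fin ℓ → ℕ) :=
  {P | Function.Injective P ∧ ∀ i, (P i).Prime ∧ Nminus N < P i ∧ (P i : ℝ) < Nplus N}

/-- The indicator `h(P,N,S,T)`. -/
def hInd (N : ℕ) {ℓ : ℕ} (P : Fin ℓ → ℕ) (S T : ∀ i, ZMod (P i)) : ℕ :=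
  if ∀ i, curveCard (P i) (S i) (T i) = N then 1 else 0

/-- `Z(P,S,T)`: the number of pairs `(a,b)`, `|a| ≤ A`, `|b| ≤ B`, which reduce to a
twist of `(s_i, t_i)` modulo `p_i` for every `i`. -/
def Zcount (A B : ℝ) {ℓ : ℕ} (P : Fin ℓ → ℕ) (S T : ∀ i, ZMod (P i)) : ℕ :=
  Nat.card {ab : ℤ × ℤ // (|ab.1| : ℝ) ≤ A ∧ (|ab.2| : ℝ) ≤ B ∧
    ∃ u : ∀ i, ZMod (P i), (∀ i, u i ≠ 0) ∧
      ∀ i, (ab.1 : ZMod (P i)) = S i * u i ^ 4 ∧ (ab.2 : ZMod (P i)) = T i * u i ^ 6}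

/-- `𝒜(conj (χ₁ ⋯ χ_ℓ)) = Σ_{|a| ≤ A} conj(χ₁ ⋯ χ_ℓ)(a)`. -/
def AsumT (A : ℝ) {ℓ : ℕ} (P : Fin ℓ → ℕ) (χ : ∀ i, DirichletCharacter ℂ (P i)) : ℂ :=
  ∑ a ∈ Finset.Icc (-⌊A⌋) ⌊A⌋, ∏ i, (starRingEnd ℂ) (χ i (a : ZMod (P i)))

/-- `ℬ(conj (χ'₁ ⋯ χ'_ℓ)) = Σ_{|b| ≤ B} conj(χ'₁ ⋯ χ'_ℓ)(b)`. -/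
def BsumT (B : ℝ) {ℓ : ℕ} (P : Fin ℓ → ℕ) (χ : ∀ i, DirichletCharacter ℂ (P i)) : ℂ :=
  ∑ b ∈ Finset.Icc (-⌊B⌋) ⌊B⌋, ∏ i, (starRingEnd ℂ) (χ i (b : ZMod (P i)))

/-- `g(P,χ,χ') = Σ_{1 ≤ s_i,t_i < p_i} h(P,N,S,T) ∏ χ_i(s_i) χ'_i(t_i)`. -/
def gSum (N : ℕ) {ℓ : ℕ} (P : Fin ℓ → ℕ) (χ χ' : ∀ i, DirichletCharacter ℂ (P i)) : ℂ :=
  ∑ᶠ (S : ∀ i, ZMod (P i)) (T : ∀ i, ZMod (P i)),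
    if (∀ i, S i ≠ 0) ∧ (∀ i, T i ≠ 0) then
      (hInd N P S T : ℂ) * ∏ i, χ i (S i) * χ' i (T i)
    else 0

/-- `Z₂(P,S,T)`: the contribution of the character tuples with all `χ_i` principal,
`(χ'_i)⁶` principal and some `χ'_j` non-principal. -/
def Z2 (A B : ℝ) {ℓ : ℕ} (P : Fin ℓ → ℕ) (S T : ∀ i, ZMod (P i)) : ℂ :=
  (1 / 2 ^ ℓ : ℂ) * ∑ᶠ χ' : ∀ i, DirichletCharacter ℂ (P i),
    if (∀ i, χ' i ^ 6 = 1) ∧ (∃ j, χ' j ≠ 1) then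
      (∏ i, ((1 : DirichletCharacter ℂ (P i)) (S i) * χ' i (T i)) / ((P i : ℂ) - 1)) *
        AsumT A P (fun _ => 1) * BsumT B P χ'
    else 0

/-- `Z₃(P,S,T)`: the contribution of the character tuples with all `χ'_i` principal,
`χ_i⁴` principal and some `χ_j` non-principal. -/
def Z3 (A B : ℝ) {ℓ : ℕ} (P : Fin ℓ → ℕ) (S T : ∀ i, ZMod (P i)) : ℂ :=
  (1 / 2 ^ ℓ : ℂ) * ∑ᶠ χ : ∀ i, DirichletCharacter ℂ (P i),
    if (∀ i, χ i ^ 4 = 1) ∧ (∃ j, χ j ≠ 1) then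
      (∏ i, (χ i (S i) * (1 : DirichletCharacter ℂ (P i)) (T i)) / ((P i : ℂ) - 1)) *
        AsumT A P χ * BsumT B P (fun _ => 1)
    else 0

/-- `Z₄(P,S,T)`: the contribution of the character tuples with `χ_i⁴ (χ'_i)⁶` principal,
some `χ_r` non-principal and some `χ'_s` non-principal. -/
def Z4 (A B : ℝ) {ℓ : ℕ} (P : Fin ℓ → ℕ) (S T : ∀ i, ZMod (P i)) : ℂ :=
  (1 / 2 ^ ℓ : ℂ) *
    ∑ᶠ (χ : ∀ i, DirichletCharacter ℂ (P i)) (χ' : ∀ i, DirichletCharacter ℂ (P i)),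
      if (∀ i, χ i ^ 4 * χ' i ^ 6 = 1) ∧ (∃ r, χ r ≠ 1) ∧ (∃ s, χ' s ≠ 1) then
        (∏ i, (χ i (S i) * χ' i (T i)) / ((P i : ℂ) - 1)) * AsumT A P χ * BsumT B P χ'
      else 0

/-- `d_{ℓ,r}(m) = Σ_{k=ℓ}^{m} (k^r/k!)·((−1)^{m−k}/(m−k)!)`. -/
def dCoef (ℓ r m : ℕ) : ℝ :=
  ∑ k ∈ Finset.Icc ℓ m,
    (k : ℝ) ^ r / (Nat.factorial k) * ((-1 : ℝ) ^ (m - k) / (Nat.factorial (m - k)))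

/-- `θ(x;q,a) = Σ_{p ≤ x, p ≡ a (mod q)} log p`. -/
def theta (x : ℝ) (q a : ℕ) : ℝ :=
  ∑ p ∈ (Finset.range (⌊x⌋₊ + 1)).filter (fun p => p.Prime ∧ p % q = a % q), Real.log p

/-- The Barban–Davenport–Halberstam conjecture for parameters `η`, `β`. -/
def BDH (η β : ℝ) : Prop :=
  ∃ C : ℝ, 0 < C ∧ ∀ X Y Q : ℝ, 0 < X → X ^ η ≤ Y → Y ≤ X →
    Y / Real.log X ^ β ≤ Q → Q ≤ Y →
    ∑ q ∈ Finset.Icc 1 ⌊Q⌋₊, ∑ a ∈ (Finset.Icc 1 q).filter (fun a => Nat.Coprime a q),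
      |theta (X + Y) q a - theta X q a - Y / (Nat.totient q : ℝ)| ^ 2
      ≤ C * (Y * Q * Real.log X)

/-- The constant `K(N)`. -/
def KN (N : ℕ) : ℝ :=
  ∏' p : Nat.Primes,
    if (p : ℕ) ∣ N then
      1 - 1 / ((p : ℝ) ^ (N.factorization (p : ℕ)) * ((p : ℝ) - 1))
    else
      1 - ((kron ((N : ℤ) - 1) (p : ℕ) : ℝ) ^ 2 * (p : ℝ) + 1) /
        (((p : ℝ) - 1) ^ 2 * ((p : ℝ) + 1))


lemma alt_sum (N : ℕ) :
    ∑ m ∈ Finset.range (N + 1), (-1 : ℝ) ^ m / (Nat.factorial m * Nat.factorial (N - m))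
      = if N = 0 then 1 else 0 := by
  have h1 : ∀ m ∈ Finset.range (N + 1),
      (-1 : ℝ) ^ m / (Nat.factorial m * Nat.factorial (N - m))
        = ((-1 : ℝ) ^ m * (N.choose m)) / Nat.factorial N := by
    intro m hm
    have hmN : m ≤ N := Nat.lt_succ_iff.mp (Finset.mem_range.mp hm)
    have hcf := Nat.choose_mul_factorial_mul_factorial hmN
    have : (Nat.factorial N : ℝ) = (N.choose m) * (Nat.factorial m * Nat.factorial (N - m)) := by
      rw [← hcf]; push_cast; ring
    rw [this]
    have h2 : (Nat.factorial m : ℝ) * Nat.factorial (N - m) ≠ 0 := by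
      positivity
    have h3 : ((N.choose m : ℝ)) ≠ 0 := by
      exact_mod_cast Nat.choose_pos hmN |>.ne'
    field_simp
  rw [Finset.sum_congr rfl h1, ← Finset.sum_div]
  have := Int.alternating_sum_range_choose (n := N)
  have hc : (∑ m ∈ Finset.range (N + 1), (-1 : ℝ) ^ m * (N.choose m))
      = ((if N = 0 then 1 else 0 : ℤ) : ℝ) := by
    rw [← this]; push_cast; rfl
  rw [hc]
  split
  · next h => subst h; norm_num
  · norm_num

lemma key_sum (ℓ r n : ℕ) (h : ℓ ≤ n) :
    ∑ j ∈ Finset.Icc ℓ n, dCoef ℓ r j / Nat.factorial (n - j)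
      = (n : ℝ) ^ r / Nat.factorial n := by
  have expand : ∑ j ∈ Finset.Icc ℓ n, dCoef ℓ r j / Nat.factorial (n - j)
      = ∑ j ∈ Finset.Icc ℓ n, ∑ k ∈ Finset.Icc ℓ j,
          ((k : ℝ) ^ r / Nat.factorial k) *
            ((-1 : ℝ) ^ (j - k) / (Nat.factorial (j - k) * Nat.factorial (n - j))) := by
    refine Finset.sum_congr rfl fun j hj => ?_
    rw [dCoef, Finset.sum_div]
    refine Finset.sum_congr rfl fun k hk => ?_
    rw [mul_div_assoc, div_div]
  rw [expand]
  rw [Finset.sum_comm' (s' := fun k => Finset.Icc k n) (t' := Finset.Icc ℓ n)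
    (by intro j k; simp only [Finset.mem_Icc]; omega)]
  have inner : ∀ k ∈ Finset.Icc ℓ n,
      ∑ j ∈ Finset.Icc k n,
        ((k : ℝ) ^ r / Nat.factorial k) *
          ((-1 : ℝ) ^ (j - k) / (Nat.factorial (j - k) * Nat.factorial (n - j)))
      = ((k : ℝ) ^ r / Nat.factorial k) * (if k = n then 1 else 0) := by
    intro k hk
    have hkn : k ≤ n := (Finset.mem_Icc.mp hk).2
    rw [← Finset.mul_sum]
    congr 1
    rw [← Finset.Ico_add_one_right_eq_Icc, Finset.sum_Ico_eq_sum_range]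
    have hrange : n + 1 - k = (n - k) + 1 := by omega
    rw [hrange]
    have : ∀ m ∈ Finset.range ((n - k) + 1),
        (-1 : ℝ) ^ (k + m - k) / (Nat.factorial (k + m - k) * Nat.factorial (n - (k + m)))
          = (-1 : ℝ) ^ m / (Nat.factorial m * Nat.factorial ((n - k) - m)) := by
      intro m hm
      have e1 : k + m - k = m := by omega
      have e2 : n - (k + m) = (n - k) - m := by omega
      rw [e1, e2]
    rw [Finset.sum_congr rfl this, alt_sum]
    have : n - k = 0 ↔ k = n := by omega
    simp [this]
  rw [Finset.sum_congr rfl inner]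
  simp only [mul_ite, mul_one, mul_zero]
  rw [Finset.sum_ite_eq' (Finset.Icc ℓ n) n]
  simp [Finset.mem_Icc, h]

/-- the inversion lemma for the coefficients `d_{ℓ,r}(j)` (Lemma 4). -/
theorem dCoef_inversion (ℓ r : ℕ) (hℓ : 1 ≤ ℓ) (hr : 1 ≤ r) (x : ℕ → ℝ)
    (hx : ∀ᶠ n in atTop, x n = 0) :
    ∑' j : ℕ, (if ℓ ≤ j then (j : ℝ) ^ r / (Nat.factorial j) * x j else 0)
      = ∑' j : ℕ, (if ℓ ≤ j then
          dCoef ℓ r j * ∑' n : ℕ, (if j ≤ n then x n / (Nat.factorial (n - j)) else 0)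
        else 0) := by
  obtain ⟨M, hM⟩ := eventually_atTop.mp hx
  -- LHS is a finite sum
  have hL : ∑' j : ℕ, (if ℓ ≤ j then (j : ℝ) ^ r / (Nat.factorial j) * x j else 0)
      = ∑ j ∈ Finset.range M, (if ℓ ≤ j then (j : ℝ) ^ r / (Nat.factorial j) * x j else 0) := by
    refine tsum_eq_sum fun j hj => ?_
    have : x j = 0 := hM j (by by_contra h'; exact hj (Finset.mem_range.mpr (by omega)))
    simp [this]
  -- inner tsums
  have hIn : ∀ j : ℕ, ∑' n : ℕ, (if j ≤ n then x n / (Nat.factorial (n - j)) else 0)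
      = ∑ n ∈ Finset.range M, (if j ≤ n then x n / (Nat.factorial (n - j)) else 0) := by
    intro j
    refine tsum_eq_sum fun n hn => ?_
    have : x n = 0 := hM n (by by_contra h'; exact hn (Finset.mem_range.mpr (by omega)))
    simp [this]
  have hR : ∑' j : ℕ, (if ℓ ≤ j then
        dCoef ℓ r j * ∑' n : ℕ, (if j ≤ n then x n / (Nat.factorial (n - j)) else 0) else 0)
      = ∑ j ∈ Finset.range M, (if ℓ ≤ j then
        dCoef ℓ r j * ∑ n ∈ Finset.range M,
          (if j ≤ n then x n / (Nat.factorial (n - j)) else 0) else 0) := by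
    rw [tsum_congr fun j => by rw [hIn j]]
    refine tsum_eq_sum fun j hj => ?_
    have hjM : M ≤ j := by by_contra h'; exact hj (Finset.mem_range.mpr (by omega))
    have : ∑ n ∈ Finset.range M, (if j ≤ n then x n / (Nat.factorial (n - j)) else 0) = 0 := by
      refine Finset.sum_eq_zero fun n hn => ?_
      have : ¬ j ≤ n := by have := Finset.mem_range.mp hn; omega
      simp [this]
    simp [this]
  rw [hL, hR]
  -- now finite sums
  have step : ∀ j : ℕ, (if ℓ ≤ j then
        dCoef ℓ r j * ∑ n ∈ Finset.range M,
          (if j ≤ n then x n / (Nat.factorial (n - j)) else 0) else 0)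
      = ∑ n ∈ Finset.range M,
          (if ℓ ≤ j ∧ j ≤ n then dCoef ℓ r j / Nat.factorial (n - j) * x n else 0) := by
    intro j
    by_cases h1 : ℓ ≤ j
    · rw [if_pos h1, Finset.mul_sum]
      refine Finset.sum_congr rfl fun n hn => ?_
      by_cases h2 : j ≤ n
      · rw [if_pos h2, if_pos ⟨h1, h2⟩]; ring
      · rw [if_neg h2, if_neg (fun h => h2 h.2), mul_zero]
    · rw [if_neg h1]
      exact (Finset.sum_eq_zero fun n hn => if_neg (fun h => h1 h.1)).symm
  rw [Finset.sum_congr rfl fun j _ => step j, Finset.sum_comm]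
  refine Finset.sum_congr rfl fun n hn => ?_
  have hnM : n < M := Finset.mem_range.mp hn
  have hfilter : ∑ j ∈ Finset.range M,
      (if ℓ ≤ j ∧ j ≤ n then dCoef ℓ r j / Nat.factorial (n - j) * x n else 0)
      = ∑ j ∈ Finset.Icc ℓ n, dCoef ℓ r j / Nat.factorial (n - j) * x n := by
    rw [← Finset.sum_filter]
    congr 1
    ext j
    simp only [Finset.mem_filter, Finset.mem_range, Finset.mem_Icc]
    omega
  rw [hfilter, ← Finset.sum_mul]
  by_cases h : ℓ ≤ n
  · rw [if_pos h, key_sum ℓ r n h]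
  · rw [if_neg h, Finset.Icc_eq_empty (by omega), Finset.sum_empty, zero_mul]


end
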